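/- Suppose binary images I₁ = α₁ χ_{S₁} and I₂ = α₂ χ_{S₂} (with α₁, α₂ > 0 normalization constants making ∫ f Iⱼ = 1) are both minimizers of the weighted TV problem inf { ∫_Ω g|∇I| : I ∈ BV(Ω), I ≥ 0, ∫_Ω f I = 1 }, and assume the minimizer set is closed under the level-set operation (Theorem 1 hypothesis) and under taking unions of minimizing sets. Then there exists a unique maximal minimizing set S_max, i.e., a minimizer χ_{S_max}/∫_{S_max} f such that the support of every minimizing set is contained in S_max. -/

import Mathlib

open MeasureTheory

noncomputable def divergence2 (φ : EuclideanSpace ℝ (Fin 2) → EuclideanSpace ℝ (Fin 2))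
    (x : EuclideanSpace ℝ (Fin 2)) : ℝ :=
  ∑ i, fderiv ℝ (fun y => φ y i) x (EuclideanSpace.single i 1)

/-- `g`-weighted total variation of `u` over `Ω`. -/
noncomputable def wTV (g : EuclideanSpace ℝ (Fin 2) → ℝ) (Ω : Set (EuclideanSpace ℝ (Fin 2)))
    (u : EuclideanSpace ℝ (Fin 2) → ℝ) : ENNReal :=
  ⨆ φ ∈ {φ : EuclideanSpace ℝ (Fin 2) → EuclideanSpace ℝ (Fin 2) |
      ContDiff ℝ 1 φ ∧ HasCompactSupport φ ∧ tsupport φ ⊆ Ω ∧ ∀ x, ‖φ x‖ ≤ g x},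
    ENNReal.ofReal (∫ x in Ω, u x * divergence2 φ x)

/-- Feasible set: nonnegative BV images with unit `f`-measurement. -/
def Feas (g f : EuclideanSpace ℝ (Fin 2) → ℝ) (Ω : Set (EuclideanSpace ℝ (Fin 2))) :
    Set (EuclideanSpace ℝ (Fin 2) → ℝ) :=
  {I | (∀ x, 0 ≤ I x) ∧ wTV g Ω I < ⊤ ∧ ∫ x in Ω, f x * I x = 1}

/-- `I` minimizes the weighted TV over the feasible set. -/
def IsMinimizer (g f : EuclideanSpace ℝ (Fin 2) → ℝ) (Ω : Set (EuclideanSpace ℝ (Fin 2)))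
    (I : EuclideanSpace ℝ (Fin 2) → ℝ) : Prop :=
  I ∈ Feas g f Ω ∧ ∀ J ∈ Feas g f Ω, wTV g Ω I ≤ wTV g Ω J

/-- `S` is a minimizing (generalized Cheeger) set: its normalized indicator minimizes. -/
def IsMinSet (g f : EuclideanSpace ℝ (Fin 2) → ℝ) (Ω S : Set (EuclideanSpace ℝ (Fin 2))) : Prop :=
  MeasurableSet S ∧ S ⊆ Ω ∧ 0 < ∫ x in S, f x ∧
    IsMinimizer g f Ω (fun x => (∫ y in S, f y)⁻¹ * S.indicator 1 x)

/-! Choose minimizing sets whose measures tend to the supremum of the measures of all minimizing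
sets. Their finite unions are minimizing by assumption, and so is the increasing union `Smax`:
the weighted total variation of a normalized indicator is a supremum of functionals that are
continuous along increasing unions, hence cannot jump up in the limit. Thus `Smax` has maximal
measure, and as `S ∪ Smax` is again minimizing, `S \ Smax` is null for every minimizing `S`. -/

local notation "ℝ²" => EuclideanSpace ℝ (Fin 2)

open Filter Topology ENNReal

theorem exists_mem_forall_measure_diff_eq_zero {α : Type*} [MeasurableSpace α] (μ : Measure α)
    {P : Set α → Prop} (hne : ∃ S, P S) (hmeas : ∀ S, P S → MeasurableSet S)
    (hfin : ∀ S, P S → μ S ≠ ∞) (hunion : ∀ S T, P S → P T → P (S ∪ T))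
    (hiUnion : ∀ T : ℕ → Set α, Monotone T → (∀ n, P (T n)) → P (⋃ n, T n)) :
    ∃ Smax, P Smax ∧ ∀ S, P S → μ (S \ Smax) = 0 := by
  obtain ⟨S₀, hS₀⟩ := hne
  obtain ⟨u, -, hu_lim, hu_mem⟩ := exists_seq_tendsto_sSup (S := μ '' {S | P S})
    ⟨μ S₀, S₀, hS₀, rfl⟩ (OrderTop.bddAbove _)
  choose S hS hμS using hu_mem
  have hacc : ∀ n, P (Set.accumulate S n) := by
    intro n
    induction n with
    | zero => simpa [Set.accumulate_zero_nat] using hS 0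
    | succ n ih => rw [Set.accumulate_succ]; exact hunion _ _ ih (hS _)
  have hmax : P (⋃ n, S n) := by
    rw [← Set.iUnion_accumulate]; exact hiUnion _ Set.monotone_accumulate hacc
  refine ⟨⋃ n, S n, hmax, fun T hT => ?_⟩
  have hsup : sSup (μ '' {S | P S}) ≤ μ (⋃ n, S n) :=
    le_of_tendsto' hu_lim fun n => hμS n ▸ measure_mono (Set.subset_iUnion S n)
  have hle : μ ((⋃ n, S n) ∪ T) ≤ μ (⋃ n, S n) :=
    (le_sSup (Set.mem_image_of_mem μ (hunion _ _ hmax hT))).trans hsup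
  rw [← Set.union_sdiff_self, measure_union' Set.disjoint_sdiff_right (hmeas _ hmax)] at hle
  exact nonpos_iff_eq_zero.1 (ENNReal.le_of_add_le_add_left (hfin _ hmax) (by rwa [add_zero]))

section divergence

variable {φ : ℝ² → ℝ²}

lemma continuous_divergence2 (hφ : ContDiff ℝ 1 φ) : Continuous (divergence2 φ) := by
  refine continuous_finsetSum _ fun i _ => ?_
  have hφi : ContDiff ℝ 1 (fun y => φ y i) := (EuclideanSpace.proj (𝕜 := ℝ) i).contDiff.comp hφ
  exact (hφi.continuous_fderiv one_ne_zero).clm_apply continuous_const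

lemma support_divergence2_subset : Function.support (divergence2 φ) ⊆ tsupport φ := by
  intro x hx
  by_contra hxφ
  refine hx (Finset.sum_eq_zero fun i _ => ?_)
  have hxi : x ∉ tsupport (fun y => φ y i) :=
    fun h => hxφ (tsupport_comp_subset (g := fun v : ℝ² => v i) rfl φ h)
  simp [fderiv_of_notMem_tsupport ℝ hxi]

lemma HasCompactSupport.divergence2 (hφ : HasCompactSupport φ) :
    HasCompactSupport (divergence2 φ) :=
  hφ.mono' support_divergence2_subset

end divergence

noncomputable def normalizedIndicator (f : ℝ² → ℝ) (S : Set ℝ²) : ℝ² → ℝ :=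
  fun x => (∫ y in S, f y)⁻¹ * S.indicator 1 x

section normalizedIndicator

variable {f g : ℝ² → ℝ} {Ω U : Set ℝ²}

lemma normalizedIndicator_nonneg (hU : 0 ≤ ∫ x in U, f x) (x : ℝ²) :
    0 ≤ normalizedIndicator f U x :=
  mul_nonneg (inv_nonneg.2 hU) (Set.indicator_nonneg (fun _ _ => zero_le_one) x)

lemma setIntegral_normalizedIndicator_mul (hU : MeasurableSet U) (hUΩ : U ⊆ Ω) (h : ℝ² → ℝ) :
    ∫ x in Ω, normalizedIndicator f U x * h x = (∫ x in U, f x)⁻¹ * ∫ x in U, h x := by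
  have hind : ∀ x, normalizedIndicator f U x * h x = (∫ y in U, f y)⁻¹ * U.indicator h x := by
    intro x; by_cases hx : x ∈ U <;> simp [normalizedIndicator, hx]
  simp only [hind]
  rw [integral_const_mul, setIntegral_indicator hU, Set.inter_eq_self_of_subset_right hUΩ]

lemma setIntegral_mul_normalizedIndicator (hU : MeasurableSet U) (hUΩ : U ⊆ Ω)
    (hfU : ∫ x in U, f x ≠ 0) : ∫ x in Ω, f x * normalizedIndicator f U x = 1 := by
  simp only [mul_comm (f _)]
  rw [setIntegral_normalizedIndicator_mul hU hUΩ, inv_mul_cancel₀ hfU]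

lemma ofReal_setIntegral_divergence2_le_wTV (hU : MeasurableSet U) (hUΩ : U ⊆ Ω) {φ : ℝ² → ℝ²}
    (hφ : ContDiff ℝ 1 φ ∧ HasCompactSupport φ ∧ tsupport φ ⊆ Ω ∧ ∀ x, ‖φ x‖ ≤ g x) :
    ENNReal.ofReal ((∫ x in U, f x)⁻¹ * ∫ x in U, divergence2 φ x) ≤
      wTV g Ω (normalizedIndicator f U) := by
  rw [← setIntegral_normalizedIndicator_mul hU hUΩ]
  exact le_iSup₂ (f := fun φ (_ : φ ∈ _) =>
    ENNReal.ofReal (∫ x in Ω, normalizedIndicator f U x * divergence2 φ x)) φ hφ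

lemma wTV_normalizedIndicator_iUnion_le {T : ℕ → Set ℝ²} (hTm : ∀ n, MeasurableSet (T n))
    (hT : Monotone T) (hTΩ : ∀ n, T n ⊆ Ω) (hf : IntegrableOn f Ω)
    (hfT : ∫ x in ⋃ n, T n, f x ≠ 0) {m : ℝ≥0∞}
    (hm : ∀ n, wTV g Ω (normalizedIndicator f (T n)) ≤ m) :
    wTV g Ω (normalizedIndicator f (⋃ n, T n)) ≤ m := by
  have hUm : MeasurableSet (⋃ n, T n) := .iUnion hTm
  have hUΩ : ⋃ n, T n ⊆ Ω := Set.iUnion_subset hTΩ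
  refine iSup₂_le fun φ hφ => ?_
  have hdiv : Integrable (divergence2 φ) :=
    (continuous_divergence2 hφ.1).integrable_of_hasCompactSupport hφ.2.1.divergence2
  have hlim : Tendsto (fun n => (∫ x in T n, f x)⁻¹ * ∫ x in T n, divergence2 φ x) atTop
      (𝓝 ((∫ x in ⋃ n, T n, f x)⁻¹ * ∫ x in ⋃ n, T n, divergence2 φ x)) :=
    ((tendsto_setIntegral_of_monotone hTm hT (hf.mono_set hUΩ)).inv₀ hfT).mul
      (tendsto_setIntegral_of_monotone hTm hT hdiv.integrableOn)
  rw [setIntegral_normalizedIndicator_mul hUm hUΩ]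
  exact le_of_tendsto' ((ENNReal.continuous_ofReal.tendsto _).comp hlim) fun n =>
    (ofReal_setIntegral_divergence2_le_wTV (hTm n) (hTΩ n) hφ).trans (hm n)

lemma IsMinSet.iUnion (hf0 : ∀ x, 0 ≤ f x) (hf : IntegrableOn f Ω) {T : ℕ → Set ℝ²}
    (hT : Monotone T) (hTmin : ∀ n, IsMinSet g f Ω (T n)) : IsMinSet g f Ω (⋃ n, T n) := by
  have hTm : ∀ n, MeasurableSet (T n) := fun n => (hTmin n).1
  have hTΩ : ∀ n, T n ⊆ Ω := fun n => (hTmin n).2.1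
  have hmin : ∀ n, IsMinimizer g f Ω (normalizedIndicator f (T n)) := fun n => (hTmin n).2.2.2
  have hUm : MeasurableSet (⋃ n, T n) := .iUnion hTm
  have hUΩ : ⋃ n, T n ⊆ Ω := Set.iUnion_subset hTΩ
  have hpos : 0 < ∫ x in ⋃ n, T n, f x :=
    (hTmin 0).2.2.1.trans_le <| setIntegral_mono_set (hf.mono_set hUΩ)
      (.of_forall hf0) (.of_forall (Set.subset_iUnion T 0))
  have hle : wTV g Ω (normalizedIndicator f (⋃ n, T n)) ≤ wTV g Ω (normalizedIndicator f (T 0)) :=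
    wTV_normalizedIndicator_iUnion_le hTm hT hTΩ hf hpos.ne' fun n => (hmin n).2 _ (hmin 0).1
  refine ⟨hUm, hUΩ, hpos, ⟨normalizedIndicator_nonneg hpos.le, hle.trans_lt (hmin 0).1.2.1,
    setIntegral_mul_normalizedIndicator hUm hUΩ hpos.ne'⟩, fun J hJ => hle.trans ((hmin 0).2 J hJ)⟩

end normalizedIndicator

theorem stmt11_general (Ω : Set (EuclideanSpace ℝ (Fin 2)))
    (hΩbdd : Bornology.IsBounded Ω)
    (f g : EuclideanSpace ℝ (Fin 2) → ℝ) (hf0 : ∀ x, 0 ≤ f x) (hfint : IntegrableOn f Ω)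
    -- the two given binary minimizers
    (S₁ : Set (EuclideanSpace ℝ (Fin 2))) (h₁ : IsMinSet g f Ω S₁)
    -- the minimizing sets are closed under union
    (hunion : ∀ S S', IsMinSet g f Ω S → IsMinSet g f Ω S' → IsMinSet g f Ω (S ∪ S')) :
    ∃ Smax : Set (EuclideanSpace ℝ (Fin 2)), IsMinSet g f Ω Smax ∧
      (∀ S, IsMinSet g f Ω S → volume (S \ Smax) = 0) ∧
      ∀ S', IsMinSet g f Ω S' → (∀ S, IsMinSet g f Ω S → volume (S \ S') = 0) →
        volume (symmDiff S' Smax) = 0 := by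
  obtain ⟨Smax, hSmax, hle⟩ := exists_mem_forall_measure_diff_eq_zero volume ⟨S₁, h₁⟩
    (fun S hS => hS.1)
    (fun S hS => ((measure_mono hS.2.1).trans_lt hΩbdd.measure_lt_top).ne) hunion
    (fun T hT hTmin => IsMinSet.iUnion hf0 hfint hT hTmin)
  refine ⟨Smax, hSmax, hle, fun S' hS' hle' => ?_⟩
  rw [Set.symmDiff_def]
  exact measure_union_null (hle S' hS') (hle' Smax hSmax)

theorem stmt11 (Ω : Set (EuclideanSpace ℝ (Fin 2))) (hΩ : MeasurableSet Ω)
    (hΩbdd : Bornology.IsBounded Ω)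
    (f g : EuclideanSpace ℝ (Fin 2) → ℝ) (hf0 : ∀ x, 0 ≤ f x) (hfint : IntegrableOn f Ω)
    (c : ℝ) (hc : 0 < c) (hg : ∀ x, c ≤ g x)
    -- the two given binary minimizers
    (S₁ S₂ : Set (EuclideanSpace ℝ (Fin 2))) (h₁ : IsMinSet g f Ω S₁) (h₂ : IsMinSet g f Ω S₂)
    -- the minimizer set is closed under the level-set operation (Theorem 1 hypothesis)
    (hlevel : ∀ I, IsMinimizer g f Ω I → ∀ μ : ℝ, 0 < μ →
      0 < ∫ x in {x | μ ≤ I x} ∩ Ω, f x → IsMinSet g f Ω ({x | μ ≤ I x} ∩ Ω))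
    -- the minimizing sets are closed under union
    (hunion : ∀ S S', IsMinSet g f Ω S → IsMinSet g f Ω S' → IsMinSet g f Ω (S ∪ S')) :
    ∃ Smax : Set (EuclideanSpace ℝ (Fin 2)), IsMinSet g f Ω Smax ∧
      (∀ S, IsMinSet g f Ω S → volume (S \ Smax) = 0) ∧
      ∀ S', IsMinSet g f Ω S' → (∀ S, IsMinSet g f Ω S → volume (S \ S') = 0) →
        volume (symmDiff S' Smax) = 0 :=
  stmt11_general Ω hΩbdd f g hf0 hfint S₁ h₁ hunion
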